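/- Piecewise linear interpolation error of the exponential: Let t > 0, let g(x) = exp(x) on [−t·log 2, 0], let Δ ∈ (0, 1/2] be the spacing of an equidistant grid of knots on [−t·log 2, 0], and let g_N be the piecewise linear interpolant of g at these knots. Then sup_{x ∈ [−t·log 2, 0]} | g(x) − g_N(x) | = exp(−Δ) + m·(log m + Δ) − m, where m = (1 − exp(−Δ))/Δ, and this quantity is at most Δ²/8. -/

import Mathlib

/-!
On the grid cell with right knot `r`, the interpolation error at `x = r + s`, `s ∈ [-Δ, 0)`, is
`exp r * (1 + m s - exp s)`, where `m` is the slope of the chord of `exp` over `[-Δ, 0]`. The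
bracket is nonnegative by convexity of `exp`, and at most `1 + m log m - m` by the Fenchel
inequality `m s - exp s ≤ m log m - m`, with equality at `s = log m`. Since `r ≤ 0` except at
the knot `x = 0`, where the error vanishes, the supremum is attained on the last cell at
`x = log m`. For the bound, `s ^ 2 / 2 - exp s` is convex on `(-∞, 0]`, so lies below its chord
over `[-Δ, 0]`; this reads `1 + m s - exp s ≤ -s (s + Δ) / 2 ≤ Δ ^ 2 / 8`.
-/

noncomputable section

/-- The piecewise linear interpolant of `g` on the equidistant grid
`{a + iΔ : i ∈ ℤ}`: it agrees with `g` at every knot and is affine on each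
interval between consecutive knots. -/
def pwlInterp (g : ℝ → ℝ) (a Δ : ℝ) (x : ℝ) : ℝ :=
  g (a + ⌊(x - a) / Δ⌋ * Δ) +
    ((x - a) / Δ - ⌊(x - a) / Δ⌋) *
      (g (a + (⌊(x - a) / Δ⌋ + 1) * Δ) - g (a + ⌊(x - a) / Δ⌋ * Δ))

open Real Set

theorem ConvexOn.le_secant {f : ℝ → ℝ} {p q x : ℝ} (hf : ConvexOn ℝ (Icc p q) f) (hpq : p < q)
    (hx : x ∈ Icc p q) : f x ≤ f q + (f q - f p) / (q - p) * (x - q) := by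
  have hqp : 0 < q - p := sub_pos.2 hpq
  have hne : q - p ≠ 0 := hqp.ne'
  have h := hf.2 (left_mem_Icc.2 hpq.le) (right_mem_Icc.2 hpq.le)
    (div_nonneg (sub_nonneg.2 hx.2) hqp.le) (div_nonneg (sub_nonneg.2 hx.1) hqp.le)
    (by field_simp; ring)
  have hcomb : (q - x) / (q - p) * p + (x - p) / (q - p) * q = x := by
    field_simp; ring
  simp only [smul_eq_mul, hcomb] at h
  calc f x ≤ _ := h
    _ = _ := by field_simp; ring

theorem mul_sub_exp_le_mul_log_sub {m : ℝ} (hm : 0 < m) (s : ℝ) :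
    m * s - exp s ≤ m * log m - m := by
  have h := mul_le_mul_of_nonneg_left (add_one_le_exp (s - log m)) hm.le
  rw [exp_sub, exp_log hm, mul_div_cancel₀ _ hm.ne'] at h
  linarith

theorem convexOn_sq_div_two_sub_exp : ConvexOn ℝ (Iic 0) fun s : ℝ => s ^ 2 / 2 - exp s := by
  refine convexOn_of_hasDerivWithinAt2_nonneg (convex_Iic 0) (by fun_prop)
    (f' := fun s => s - exp s) (f'' := fun s => 1 - exp s) (fun x _ => ?_) (fun x _ => ?_) ?_
  · exact ((((hasDerivAt_pow 2 x).div_const 2).sub (hasDerivAt_exp x)).congr_deriv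
      (by norm_num)).hasDerivWithinAt
  · exact ((hasDerivAt_id x).sub (hasDerivAt_exp x)).hasDerivWithinAt
  · intro x hx
    rw [interior_Iic] at hx
    exact sub_nonneg.2 (exp_le_one_iff.2 (le_of_lt hx))

/-- The slope of the chord of `exp` over `[-Δ, 0]`: the `m` of the theorem. -/
def expChordSlope (Δ : ℝ) : ℝ := (1 - exp (-Δ)) / Δ

theorem expChordSlope_mul {Δ : ℝ} (hΔ : Δ ≠ 0) : expChordSlope Δ * Δ = 1 - exp (-Δ) :=
  div_mul_cancel₀ _ hΔ

theorem exp_neg_le_expChordSlope {Δ : ℝ} (hΔ : 0 < Δ) : exp (-Δ) ≤ expChordSlope Δ := by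
  have h := mul_le_mul_of_nonneg_left (add_one_le_exp Δ) (exp_pos (-Δ)).le
  rw [← exp_add, neg_add_cancel, exp_zero] at h
  rw [expChordSlope, le_div_iff₀ hΔ]
  linarith

theorem expChordSlope_lt_one {Δ : ℝ} (hΔ : 0 < Δ) : expChordSlope Δ < 1 := by
  rw [expChordSlope, div_lt_one hΔ]
  linarith [add_one_lt_exp (neg_ne_zero.2 hΔ.ne')]

theorem expChordSlope_pos {Δ : ℝ} (hΔ : 0 < Δ) : 0 < expChordSlope Δ :=
  (exp_pos _).trans_le (exp_neg_le_expChordSlope hΔ)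

theorem log_expChordSlope_mem_Ico {Δ : ℝ} (hΔ : 0 < Δ) : log (expChordSlope Δ) ∈ Ico (-Δ) 0 :=
  ⟨(log_exp (-Δ)).symm.trans_le (log_le_log (exp_pos _) (exp_neg_le_expChordSlope hΔ)),
    log_neg (expChordSlope_pos hΔ) (expChordSlope_lt_one hΔ)⟩

theorem exp_le_one_add_expChordSlope_mul {Δ s : ℝ} (hΔ : 0 < Δ) (hs : s ∈ Icc (-Δ) 0) :
    exp s ≤ 1 + expChordSlope Δ * s := by
  have h := (convexOn_exp.subset (subset_univ _) (convex_Icc (-Δ) 0)).le_secant (by linarith) hs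
  simpa [expChordSlope] using h

theorem one_add_expChordSlope_mul_sub_exp_le {Δ s : ℝ} (hΔ : 0 < Δ) (hs : s ∈ Icc (-Δ) 0) :
    1 + expChordSlope Δ * s - exp s ≤ -(s * (s + Δ)) / 2 := by
  have h := (convexOn_sq_div_two_sub_exp.subset Icc_subset_Iic_self (convex_Icc (-Δ) 0)).le_secant
    (by linarith) hs
  have hslope : (0 ^ 2 / 2 - 1 - ((-Δ) ^ 2 / 2 - exp (-Δ))) / (0 - -Δ)
      = -expChordSlope Δ - Δ / 2 := by
    rw [expChordSlope]; field_simp [hΔ.ne']; ring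
  rw [exp_zero, hslope] at h
  linear_combination h

def pwlRightKnot (a Δ x : ℝ) : ℝ := a + (⌊(x - a) / Δ⌋ + 1) * Δ

theorem pwlInterp_exp_sub_exp {a Δ : ℝ} (hΔ : Δ ≠ 0) (x : ℝ) :
    pwlInterp exp a Δ x - exp x = exp (pwlRightKnot a Δ x) *
      (1 + expChordSlope Δ * (x - pwlRightKnot a Δ x) - exp (x - pwlRightKnot a Δ x)) := by
  unfold pwlInterp pwlRightKnot expChordSlope
  set k : ℝ := ((⌊(x - a) / Δ⌋ : ℤ) : ℝ)
  have hleft : exp (a + k * Δ) = exp (a + (k + 1) * Δ) * exp (-Δ) := by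
    rw [← exp_add]; ring_nf
  have hx : exp x = exp (a + (k + 1) * Δ) * exp (x - (a + (k + 1) * Δ)) := by
    rw [← exp_add]; ring_nf
  rw [hleft, hx]
  field_simp
  ring

theorem pwlRightKnot_eq {a Δ x : ℝ} (hΔ : 0 < Δ) (k : ℤ)
    (hx : x ∈ Ico (a + k * Δ) (a + (k + 1) * Δ)) : pwlRightKnot a Δ x = a + (k + 1) * Δ := by
  have hk : ⌊(x - a) / Δ⌋ = k := by
    rw [Int.floor_eq_iff, le_div_iff₀ hΔ, div_lt_iff₀ hΔ]
    constructor <;> linarith [hx.1, hx.2]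
  rw [pwlRightKnot, hk]

theorem sub_pwlRightKnot_mem_Ico {a Δ : ℝ} (hΔ : 0 < Δ) (x : ℝ) :
    x - pwlRightKnot a Δ x ∈ Ico (-Δ) 0 := by
  have hle := (le_div_iff₀ hΔ).1 (Int.floor_le ((x - a) / Δ))
  have hlt := (div_lt_iff₀ hΔ).1 (Int.lt_floor_add_one ((x - a) / Δ))
  rw [pwlRightKnot]
  constructor <;> linarith

theorem pwlRightKnot_le_of_lt {a Δ x : ℝ} (hΔ : 0 < Δ) (N : ℤ) (hx : x < a + N * Δ) :
    pwlRightKnot a Δ x ≤ a + N * Δ := by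
  have hk : ⌊(x - a) / Δ⌋ < N := Int.floor_lt.2 (by rw [div_lt_iff₀ hΔ]; linarith)
  have hk' : ((⌊(x - a) / Δ⌋ : ℤ) : ℝ) + 1 ≤ N := by exact_mod_cast hk
  have := mul_le_mul_of_nonneg_right hk' hΔ.le
  rw [pwlRightKnot]
  linarith

theorem abs_exp_sub_pwlInterp_exp_le {a Δ x : ℝ} (hΔ : 0 < Δ) (N : ℤ) (hN : a + N * Δ = 0)
    (hx : x ≤ 0) :
    |exp x - pwlInterp exp a Δ x|
      ≤ 1 + expChordSlope Δ * log (expChordSlope Δ) - expChordSlope Δ := by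
  rw [abs_sub_comm, pwlInterp_exp_sub_exp hΔ.ne']
  set r := pwlRightKnot a Δ x
  set m := expChordSlope Δ
  have hs : x - r ∈ Ico (-Δ) 0 := sub_pwlRightKnot_mem_Ico hΔ x
  have hgap : 0 ≤ 1 + m * (x - r) - exp (x - r) :=
    sub_nonneg.2 (exp_le_one_add_expChordSlope_mul hΔ (Ico_subset_Icc_self hs))
  have hmax := mul_sub_exp_le_mul_log_sub (expChordSlope_pos hΔ)
  rw [abs_of_nonneg (mul_nonneg (exp_pos r).le hgap)]
  rcases hx.lt_or_eq with hx | rfl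
  · have hr : exp r ≤ 1 := exp_le_one_iff.2 (hN ▸ pwlRightKnot_le_of_lt hΔ N (hN ▸ hx))
    calc exp r * _ ≤ 1 + m * (x - r) - exp (x - r) := mul_le_of_le_one_left hgap hr
      _ ≤ _ := by linarith [hmax (x - r)]
  · have hr : r = Δ := by
      have := pwlRightKnot_eq (a := a) (x := 0) hΔ N ⟨by linarith, by linarith⟩
      linarith
    have hknot : 1 + m * (0 - r) - exp (0 - r) = 0 := by
      rw [hr, zero_sub, mul_neg, expChordSlope_mul hΔ.ne']
      ring
    rw [hknot, mul_zero]
    linarith [hmax 0, exp_zero]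

theorem abs_exp_sub_pwlInterp_exp_log_expChordSlope {a Δ : ℝ} (hΔ : 0 < Δ) (N : ℤ)
    (hN : a + N * Δ = 0) :
    |exp (log (expChordSlope Δ)) - pwlInterp exp a Δ (log (expChordSlope Δ))|
      = 1 + expChordSlope Δ * log (expChordSlope Δ) - expChordSlope Δ := by
  set m := expChordSlope Δ
  have hm := expChordSlope_pos hΔ
  have hs := log_expChordSlope_mem_Ico hΔ
  have hr : pwlRightKnot a Δ (log m) = 0 := by
    have := pwlRightKnot_eq (a := a) (x := log m) hΔ (N - 1)
      ⟨by push_cast; linarith [hs.1], by push_cast; linarith [hs.2]⟩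
    push_cast at this
    linarith
  rw [abs_sub_comm, pwlInterp_exp_sub_exp hΔ.ne', hr, sub_zero, exp_zero, one_mul, exp_log hm]
  exact abs_of_nonneg (by linarith [mul_sub_exp_le_mul_log_sub hm 0, exp_zero])

theorem pwl_interp_error_exp_general (t Δ : ℝ)
    (hΔ : 0 < Δ)
    (hgrid : ∃ N : ℕ, 1 ≤ N ∧ t * Real.log 2 = N * Δ)
    (m : ℝ) (hm : m = (1 - Real.exp (-Δ)) / Δ) :
    sSup ((fun x => |Real.exp x - pwlInterp Real.exp (-(t * Real.log 2)) Δ x|) ''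
        Set.Icc (-(t * Real.log 2)) 0)
      = Real.exp (-Δ) + m * (Real.log m + Δ) - m ∧
    Real.exp (-Δ) + m * (Real.log m + Δ) - m ≤ Δ ^ 2 / 8 := by
  obtain ⟨N, hN1, hNΔ⟩ := hgrid
  obtain rfl : m = expChordSlope Δ := hm
  set m := expChordSlope Δ
  have hN : -(t * log 2) + ((N : ℤ) : ℝ) * Δ = 0 := by push_cast; linarith
  have hs : log m ∈ Ico (-Δ) 0 := log_expChordSlope_mem_Ico hΔ
  have hV : exp (-Δ) + m * (log m + Δ) - m = 1 + m * log m - m := by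
    linear_combination expChordSlope_mul hΔ.ne'
  rw [hV]
  refine ⟨IsGreatest.csSup_eq ⟨⟨log m, ⟨?_, hs.2.le⟩,
    abs_exp_sub_pwlInterp_exp_log_expChordSlope hΔ N hN⟩, ?_⟩, ?_⟩
  · have : Δ ≤ N * Δ := le_mul_of_one_le_left hΔ.le (by exact_mod_cast hN1)
    linarith [hs.1]
  · rintro _ ⟨x, hx, rfl⟩
    exact abs_exp_sub_pwlInterp_exp_le hΔ N hN hx.2
  · calc _ = 1 + m * log m - exp (log m) := by rw [exp_log (expChordSlope_pos hΔ)]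
      _ ≤ -(log m * (log m + Δ)) / 2 :=
          one_add_expChordSlope_mul_sub_exp_le hΔ (Ico_subset_Icc_self hs)
      _ ≤ Δ ^ 2 / 8 := by nlinarith [sq_nonneg (2 * log m + Δ)]

/-- **Piecewise linear interpolation error of the exponential.**
For `g(x) = exp(x)` on `[−t log 2, 0]` and an equidistant grid of spacing
`Δ ∈ (0, 1/2]` (with `t log 2 = N Δ` for some `N ≥ 1`), the supremum of the
interpolation error equals `exp(−Δ) + m(log m + Δ) − m`, where
`m = (1 − exp(−Δ))/Δ`, and this quantity is at most `Δ²/8`. -/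
theorem pwl_interp_error_exp (t Δ : ℝ) (ht : 0 < t)
    (hΔ : 0 < Δ) (hΔ' : Δ ≤ 1 / 2)
    (hgrid : ∃ N : ℕ, 1 ≤ N ∧ t * Real.log 2 = N * Δ)
    (m : ℝ) (hm : m = (1 - Real.exp (-Δ)) / Δ) :
    sSup ((fun x => |Real.exp x - pwlInterp Real.exp (-(t * Real.log 2)) Δ x|) ''
        Set.Icc (-(t * Real.log 2)) 0)
      = Real.exp (-Δ) + m * (Real.log m + Δ) - m ∧
    Real.exp (-Δ) + m * (Real.log m + Δ) - m ≤ Δ ^ 2 / 8 :=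
  pwl_interp_error_exp_general t Δ hΔ hgrid m hm

end
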